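/- arXiv:1707.07314 — 3 statements merged into one kernel-verified Lean document; each statement's English description precedes it below -/
import Mathlib

section
/- Assume q is a power of 2. Let δ ∈ F_{q²}* be an element whose multiplicative order n equals q−1 > 1 or q+1, set c = δ + δ^{-1}, let τ be the automorphism τ(x) = x, τ(y) = y + c, and set σ = τ·ω, so that σ(x) = x/(y+c) and σ(y) = 1/(y+c). Then σ has order n, the relation ω σ = σ^{n−1} ω holds, and the group D = ⟨τ, ω⟩ is isomorphic to the dihedral group of order 2n with presentation ⟨ω, σ | ω² = 1, σ^n = 1, ωσ = σ^{n−1}ω⟩. -/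
/-!
Work in characteristic 2 and write `a` for the image of `δ` in `H`. The Möbius coordinate
`z = (y + a) / (y + a⁻¹)` and `w = x / (y + a⁻¹)` are eigenvectors of `σ`, with `σ z = δ² z` and
`σ w = δ w`. Since `y` is recovered from `z`, then `x` from `w`, and squaring is injective in
characteristic 2, `σ ^ m = 1` exactly when `δ ^ m = 1`. As `τ` and `ω` are involutions and
`σ = τ ω`, conjugation by `ω` inverts `σ`. Finally `ω z = δ² / z`, so `ω = σ ^ k` would make `z²`
a constant, whereas `z` is transcendental. An involution that inverts an element `σ` of order `n`
and lies outside `⟨σ⟩` generates together with `σ` a dihedral group of order `2n`.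
-/

section DihedralLift

variable {G : Type*} [Group G] {a b : G}

theorem zpow_mul_eq_mul_zpow_neg (hab : b * a * b⁻¹ = a⁻¹) (k : ℤ) :
    a ^ k * b = b * a ^ (-k) := by
  rw [← inv_mul_cancel_right (b * a ^ (-k)) b, ← conj_zpow, hab, inv_zpow', neg_neg]

namespace DihedralGroup

theorem zpow_cast_eq_zpow_iff {i : ZMod (orderOf a)} {k : ℤ} :
    a ^ (i.cast : ℤ) = a ^ k ↔ (k : ZMod (orderOf a)) = i := by
  rw [zpow_eq_zpow_iff_modEq, ← ZMod.intCast_eq_intCast_iff, ZMod.intCast_zmod_cast, eq_comm]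

noncomputable def lift (hb : b * b = 1) (hab : b * a * b⁻¹ = a⁻¹) :
    DihedralGroup (orderOf a) →* G where
  toFun
    | r i => a ^ (i.cast : ℤ)
    | sr i => b * a ^ (i.cast : ℤ)
  map_one' := zpow_cast_eq_zpow_iff.mpr Int.cast_zero |>.trans (zpow_zero a)
  map_mul' := by
    rintro (i | i) (j | j)
    · show a ^ _ = a ^ _ * a ^ _
      rw [← zpow_add]
      exact zpow_cast_eq_zpow_iff.mpr (by simp)
    · show b * a ^ _ = a ^ _ * (b * a ^ _)
      rw [← mul_assoc, zpow_mul_eq_mul_zpow_neg hab, mul_assoc, ← zpow_add]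
      exact congrArg (b * ·) (zpow_cast_eq_zpow_iff.mpr (by simp [sub_eq_neg_add]))
    · show b * a ^ _ = b * a ^ _ * a ^ _
      rw [mul_assoc, ← zpow_add]
      exact congrArg (b * ·) (zpow_cast_eq_zpow_iff.mpr (by simp))
    · show a ^ _ = b * a ^ _ * (b * a ^ _)
      rw [mul_assoc, ← mul_assoc (a ^ _), zpow_mul_eq_mul_zpow_neg hab, mul_assoc, ← mul_assoc,
        hb, one_mul, ← zpow_add]
      exact zpow_cast_eq_zpow_iff.mpr (by simp [sub_eq_neg_add])

theorem lift_injective (hb : b * b = 1) (hab : b * a * b⁻¹ = a⁻¹)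
    (hbz : b ∉ Subgroup.zpowers a) : Function.Injective (lift hb hab) := by
  refine (injective_iff_map_eq_one _).mpr ?_
  rintro (i | i) h
  · change a ^ (i.cast : ℤ) = 1 at h
    rw [← zpow_zero a, zpow_cast_eq_zpow_iff, Int.cast_zero] at h
    rw [← h, one_def]
  · change b * a ^ (i.cast : ℤ) = 1 at h
    exact absurd ⟨-(i.cast : ℤ), (zpow_neg a _).trans (eq_inv_of_mul_eq_one_left h).symm⟩ hbz

theorem range_lift (hb : b * b = 1) (hab : b * a * b⁻¹ = a⁻¹) :
    (lift hb hab).range = Subgroup.closure {a, b} := by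
  have ha_mem : a ∈ Subgroup.closure {a, b} := Subgroup.subset_closure (by simp)
  have hb_mem : b ∈ Subgroup.closure {a, b} := Subgroup.subset_closure (by simp)
  apply le_antisymm
  · rintro _ ⟨i | i, rfl⟩
    · exact zpow_mem ha_mem _
    · exact mul_mem hb_mem (zpow_mem ha_mem _)
  · rw [Subgroup.closure_le, Set.insert_subset_iff, Set.singleton_subset_iff]
    refine ⟨⟨r 1, ?_⟩, ⟨sr 0, ?_⟩⟩
    · exact (zpow_cast_eq_zpow_iff.mpr Int.cast_one).trans (zpow_one a)
    · exact congrArg (b * ·) (zpow_cast_eq_zpow_iff.mpr Int.cast_zero) |>.trans (by simp)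

theorem nonempty_closure_mulEquiv (hb : b * b = 1) (hab : b * a * b⁻¹ = a⁻¹)
    (hbz : b ∉ Subgroup.zpowers a) :
    Nonempty (Subgroup.closure {a, b} ≃* DihedralGroup (orderOf a)) :=
  ⟨((MonoidHom.ofInjective (lift_injective hb hab hbz)).trans
    (MulEquiv.subgroupCongr (range_lift hb hab))).symm⟩

end DihedralGroup

end DihedralLift

theorem Subgroup.closure_pair_mul_left {G : Type*} [Group G] (a b : G) :
    closure {a * b, b} = closure {a, b} := by
  apply le_antisymm <;> rw [closure_le, Set.insert_subset_iff, Set.singleton_subset_iff]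
  · exact ⟨mul_mem (subset_closure (by simp)) (subset_closure (by simp)), subset_closure (by simp)⟩
  · refine ⟨?_, subset_closure (by simp)⟩
    simpa using mul_mem (subset_closure (show a * b ∈ ({a * b, b} : Set G) by simp))
      (inv_mem (subset_closure (show b ∈ ({a * b, b} : Set G) by simp)))

theorem Transcendental.ne_zero {K A : Type*} [CommRing K] [Nontrivial K] [Ring A] [Algebra K A]
    {t : A} (ht : Transcendental K t) : t ≠ 0 := by
  rintro rfl
  exact ht isAlgebraic_zero

theorem Transcendental.add_algebraMap_ne_zero {K A : Type*} [CommRing K] [Nontrivial K] [Ring A]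
    [Algebra K A] {t : A} (ht : Transcendental K t) (d : K) : t + algebraMap K A d ≠ 0 := by
  intro h
  exact ht (by rw [eq_neg_of_add_eq_zero_left h, ← map_neg]; exact isAlgebraic_algebraMap _)

theorem transcendental_of_pow_add_self_eq_pow {K A : Type*} [Field K] [CommRing A] [Algebra K A]
    {x y : A} {q : ℕ} (hx : Transcendental K x) (h : y ^ q + y = x ^ (q + 1)) :
    Transcendental K y :=
  fun hy => hx (.of_pow q.succ_pos (h ▸ (hy.pow q).add hy))

theorem Transcendental.add_inv_add_ne_zero {K H : Type*} [Field K] [Field H] [Algebra K H] {y : H}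
    (hy : Transcendental K y) (δ : K) :
    y + (algebraMap K H δ + (algebraMap K H δ)⁻¹) ≠ 0 := by
  rw [← map_inv₀, ← map_add]
  exact hy.add_algebraMap_ne_zero _

section Mobius

variable {F : Type*} [Field F] {a s t : F}

def mobiusCoord (a t : F) : F := (t + a) / (t + a⁻¹)

theorem mobiusCoord_inv (ha : a ≠ 0) (ht : t ≠ 0) :
    mobiusCoord a t⁻¹ = a ^ 2 / mobiusCoord a t := by
  unfold mobiusCoord
  field_simp
  ring

theorem mobiusCoord_injOn (ha : a ≠ a⁻¹) (hs : s + a⁻¹ ≠ 0) (ht : t + a⁻¹ ≠ 0)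
    (h : mobiusCoord a s = mobiusCoord a t) : s = t := by
  rw [mobiusCoord, mobiusCoord, div_eq_div_iff hs ht] at h
  have : (s - t) * (a⁻¹ - a) = 0 := by linear_combination h
  exact sub_eq_zero.mp ((mul_eq_zero.mp this).resolve_right (sub_ne_zero.mpr ha.symm))

theorem Transcendental.mobiusCoord_algebraMap {K : Type*} [Field K] [Algebra K F]
    (ht : Transcendental K t) (d : K) (hd : algebraMap K F d ≠ (algebraMap K F d)⁻¹) :
    Transcendental K (mobiusCoord (algebraMap K F d) t) := by
  set a := algebraMap K F d
  set z := mobiusCoord a t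
  intro hz
  have hta : t + a⁻¹ ≠ 0 := map_inv₀ (algebraMap K F) d ▸ ht.add_algebraMap_ne_zero d⁻¹
  have hz1 : z - 1 ≠ 0 :=
    sub_ne_zero.mpr fun h => hd (add_left_cancel ((div_eq_one_iff_eq hta).mp h))
  have ht_eq : t = (a - z * a⁻¹) * (z - 1)⁻¹ := by
    rw [eq_mul_inv_iff_mul_eq₀ hz1]
    have hzt : z * (t + a⁻¹) = t + a := div_mul_cancel₀ _ hta
    linear_combination hzt
  refine ht (ht_eq ▸ ((isAlgebraic_algebraMap d).sub (hz.mul ?_)).mul (hz.sub isAlgebraic_one).inv)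
  rw [← map_inv₀]
  exact isAlgebraic_algebraMap _

variable [CharP F 2]

theorem inv_add_add_inv_add_inv (ha : a ≠ 0) (ht : t + (a + a⁻¹) ≠ 0) :
    (t + (a + a⁻¹))⁻¹ + a⁻¹ = a⁻¹ * (t + a⁻¹) * (t + (a + a⁻¹))⁻¹ := by
  linear_combination (-a⁻¹) * mul_inv_cancel₀ ht + (t + (a + a⁻¹))⁻¹ * mul_inv_cancel₀ ha +
    (t + (a + a⁻¹))⁻¹ * CharTwo.two_eq_zero (R := F)

theorem mobiusCoord_inv_add_add_inv (ha : a ≠ 0) (ht : t + (a + a⁻¹) ≠ 0) :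
    mobiusCoord a (t + (a + a⁻¹))⁻¹ = a ^ 2 * mobiusCoord a t := by
  have hnum : (t + (a + a⁻¹))⁻¹ + a = a * (t + a) * (t + (a + a⁻¹))⁻¹ := by
    linear_combination (-a) * mul_inv_cancel₀ ht + (t + (a + a⁻¹))⁻¹ * mul_inv_cancel₀ ha +
      (t + (a + a⁻¹))⁻¹ * CharTwo.two_eq_zero (R := F)
  rw [mobiusCoord, mobiusCoord, hnum, inv_add_add_inv_add_inv ha ht,
    mul_div_mul_right _ _ (inv_ne_zero ht)]
  field_simp

theorem div_div_inv_add_add_inv_add_inv (x : F) (ha : a ≠ 0) (ht : t + (a + a⁻¹) ≠ 0) :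
    x / (t + (a + a⁻¹)) / ((t + (a + a⁻¹))⁻¹ + a⁻¹) = a * (x / (t + a⁻¹)) := by
  rw [inv_add_add_inv_add_inv ha ht, div_eq_mul_inv x, mul_div_mul_right _ _ (inv_ne_zero ht)]
  field_simp

end Mobius

section Automorphisms

variable {K H : Type*} [Field K] [Field H] [Algebra K H]

theorem AlgEquiv.eq_one_of_adjoin_eq_top {s : Set H} (hs : IntermediateField.adjoin K s = ⊤)
    {f : H ≃ₐ[K] H} (h : ∀ z ∈ s, f z = z) : f = 1 := by
  ext z
  have hz : z ∈ IntermediateField.adjoin K s := hs ▸ IntermediateField.mem_top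
  induction hz using IntermediateField.adjoin_induction with
  | mem z hz => exact h z hz
  | algebraMap d => exact f.commutes d
  | add _ _ _ _ h₁ h₂ => rw [map_add, h₁, h₂]; rfl
  | inv _ _ h => rw [map_inv₀, h]; rfl
  | mul _ _ _ _ h₁ h₂ => rw [map_mul, h₁, h₂]; rfl

theorem AlgEquiv.mul_self_eq_one_of_apply_div {x y : H}
    (hgen : IntermediateField.adjoin K {x, y} = ⊤) (hy : y ≠ 0) {ω : H ≃ₐ[K] H} (hωx : ω x = x / y) (hωy : ω y = 1 / y) : ω * ω = 1 := by
  refine eq_one_of_adjoin_eq_top hgen ?_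
  rintro _ (rfl | rfl)
  · rw [mul_apply, hωx, map_div₀, hωx, hωy, div_div_div_cancel_right₀ hy, div_one]
  · rw [mul_apply, hωy, map_div₀, map_one, hωy, one_div_one_div]

theorem AlgEquiv.mul_self_eq_one_of_apply_add_algebraMap [CharP H 2] {x y : H}
    (hgen : IntermediateField.adjoin K {x, y} = ⊤) {c : K} {τ : H ≃ₐ[K] H} (hτx : τ x = x)
    (hτy : τ y = y + algebraMap K H c) : τ * τ = 1 := by
  refine eq_one_of_adjoin_eq_top hgen ?_
  rintro _ (rfl | rfl)
  · rw [mul_apply, hτx, hτx]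
  · rw [mul_apply, hτy, map_add, hτy, commutes, CharTwo.add_cancel_right]

theorem AlgEquiv.zpow_apply_eq_of_apply_eq {f : H ≃ₐ[K] H} {z : H} {e : K} (he : e ≠ 0)
    (h : f z = algebraMap K H e * z) (k : ℤ) : (f ^ k) z = algebraMap K H (e ^ k) * z := by
  have h_inv : f⁻¹ z = algebraMap K H e⁻¹ * z := by
    apply f.injective
    rw [← mul_apply, mul_inv_cancel, one_apply, map_mul, commutes, h, ← mul_assoc, ← map_mul,
      inv_mul_cancel₀ he, map_one, one_mul]
  induction k with
  | zero => simp
  | succ k ih =>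
    rw [zpow_add_one, mul_apply, h, map_mul, commutes, ih, ← mul_assoc, ← map_mul,
      zpow_add_one₀ he, mul_comm e]
  | pred k ih =>
    rw [zpow_sub_one, mul_apply, h_inv, map_mul, commutes, ih, ← mul_assoc, ← map_mul,
      zpow_sub_one₀ he, mul_comm e⁻¹]

theorem AlgEquiv.pow_apply_eq_of_apply_eq {f : H ≃ₐ[K] H} {z : H} {e : K} (he : e ≠ 0)
    (h : f z = algebraMap K H e * z) (m : ℕ) :
    (f ^ m) z = algebraMap K H (e ^ m) * z := by
  rw [← zpow_natCast, zpow_apply_eq_of_apply_eq he h, zpow_natCast]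

theorem AlgEquiv.map_mobiusCoord_algebraMap (f : H ≃ₐ[K] H) (d : K) (t : H) :
    f (mobiusCoord (algebraMap K H d) t) = mobiusCoord (algebraMap K H d) (f t) := by
  simp only [mobiusCoord, map_div₀, map_add, map_inv₀, commutes]

end Automorphisms

section MobiusAutomorphism

variable {K H : Type*} [Field K] [Field H] [Algebra K H] [CharP H 2] {x y : H} {δ : K}
  {σ : H ≃ₐ[K] H}

theorem algebraMap_ne_inv_algebraMap (hδ0 : δ ≠ 0) (hδ1 : δ ≠ 1) :
    algebraMap K H δ ≠ (algebraMap K H δ)⁻¹ := by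
  intro h
  have hsq := mul_inv_cancel₀ ((map_ne_zero (algebraMap K H)).mpr hδ0)
  rw [← h, ← sq, ← one_pow 2, CharTwo.sq_inj, ← map_one (algebraMap K H)] at hsq
  exact hδ1 ((algebraMap K H).injective hsq)

theorem apply_mobiusCoord_of_apply_eq_inv_add (hy : Transcendental K y) (hδ0 : δ ≠ 0)
    (hσy : σ y = (y + (algebraMap K H δ + (algebraMap K H δ)⁻¹))⁻¹) :
    σ (mobiusCoord (algebraMap K H δ) y) =
      algebraMap K H (δ ^ 2) * mobiusCoord (algebraMap K H δ) y := by
  rw [σ.map_mobiusCoord_algebraMap, hσy,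
    mobiusCoord_inv_add_add_inv ((map_ne_zero _).mpr hδ0) (hy.add_inv_add_ne_zero δ), map_pow]

theorem apply_div_of_apply_eq_inv_add (hy : Transcendental K y) (hδ0 : δ ≠ 0)
    (hσx : σ x = x / (y + (algebraMap K H δ + (algebraMap K H δ)⁻¹)))
    (hσy : σ y = (y + (algebraMap K H δ + (algebraMap K H δ)⁻¹))⁻¹) :
    σ (x / (y + (algebraMap K H δ)⁻¹)) = algebraMap K H δ * (x / (y + (algebraMap K H δ)⁻¹)) := by
  rw [map_div₀, map_add, map_inv₀, σ.commutes, hσx, hσy,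
    div_div_inv_add_add_inv_add_inv x ((map_ne_zero _).mpr hδ0) (hy.add_inv_add_ne_zero δ)]

theorem pow_eq_one_iff_of_apply_eq_inv_add (hgen : IntermediateField.adjoin K {x, y} = ⊤)
    (hy : Transcendental K y) (hδ0 : δ ≠ 0) (hδ1 : δ ≠ 1)
    (hσx : σ x = x / (y + (algebraMap K H δ + (algebraMap K H δ)⁻¹)))
    (hσy : σ y = (y + (algebraMap K H δ + (algebraMap K H δ)⁻¹))⁻¹) (m : ℕ) :
    σ ^ m = 1 ↔ δ ^ m = 1 := by
  have hinv : y + (algebraMap K H δ)⁻¹ ≠ 0 :=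
    map_inv₀ (algebraMap K H) δ ▸ hy.add_algebraMap_ne_zero δ⁻¹
  have hz := AlgEquiv.pow_apply_eq_of_apply_eq (pow_ne_zero 2 hδ0)
    (apply_mobiusCoord_of_apply_eq_inv_add hy hδ0 hσy) m
  have hw := AlgEquiv.pow_apply_eq_of_apply_eq hδ0 (apply_div_of_apply_eq_inv_add hy hδ0 hσx hσy) m
  rw [← pow_mul, mul_comm 2 m, pow_mul] at hz
  constructor
  · intro h
    have hz0 := (hy.mobiusCoord_algebraMap δ (algebraMap_ne_inv_algebraMap hδ0 hδ1)).ne_zero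
    rw [h, AlgEquiv.one_apply, eq_comm, mul_eq_right₀ hz0, map_pow, ← one_pow 2, CharTwo.sq_inj,
      ← map_one (algebraMap K H)] at hz
    exact (algebraMap K H).injective hz
  · intro h
    rw [h, one_pow, map_one, one_mul, AlgEquiv.map_mobiusCoord_algebraMap] at hz
    rw [h, map_one, one_mul] at hw
    have hy_fix : (σ ^ m) y = y := mobiusCoord_injOn (algebraMap_ne_inv_algebraMap hδ0 hδ1)
      (by
        rw [← (σ ^ m).commutes δ, ← map_inv₀, ← map_add]
        exact (map_ne_zero _).mpr hinv) hinv hz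
    refine AlgEquiv.eq_one_of_adjoin_eq_top hgen ?_
    rintro _ (rfl | rfl)
    · rw [map_div₀, map_add, map_inv₀, AlgEquiv.commutes, hy_fix] at hw
      exact (div_left_inj' hinv).mp hw
    · exact hy_fix

theorem orderOf_eq_of_apply_eq_inv_add (hgen : IntermediateField.adjoin K {x, y} = ⊤)
    (hy : Transcendental K y) (hδ0 : δ ≠ 0) (hδ1 : δ ≠ 1)
    (hσx : σ x = x / (y + (algebraMap K H δ + (algebraMap K H δ)⁻¹)))
    (hσy : σ y = (y + (algebraMap K H δ + (algebraMap K H δ)⁻¹))⁻¹) :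
    orderOf σ = orderOf δ :=
  orderOf_eq_orderOf_iff.mpr (pow_eq_one_iff_of_apply_eq_inv_add hgen hy hδ0 hδ1 hσx hσy)

theorem notMem_zpowers_of_apply_eq_inv {ω : H ≃ₐ[K] H} (hy : Transcendental K y)
    (hδ0 : δ ≠ 0) (hδ1 : δ ≠ 1) (hωy : ω y = y⁻¹)
    (hσy : σ y = (y + (algebraMap K H δ + (algebraMap K H δ)⁻¹))⁻¹) :
    ω ∉ Subgroup.zpowers σ := by
  rintro ⟨k, hk⟩
  have hz_tr := hy.mobiusCoord_algebraMap δ (algebraMap_ne_inv_algebraMap hδ0 hδ1)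
  set z := mobiusCoord (algebraMap K H δ) y
  have hωz : ω z = algebraMap K H (δ ^ 2) / z := by
    rw [ω.map_mobiusCoord_algebraMap, hωy, map_pow,
      mobiusCoord_inv ((map_ne_zero (algebraMap K H)).mpr hδ0) hy.ne_zero]
  have hσz := AlgEquiv.zpow_apply_eq_of_apply_eq (pow_ne_zero 2 hδ0)
    (apply_mobiusCoord_of_apply_eq_inv_add hy hδ0 hσy) k
  rw [show σ ^ k = ω from hk, hωz, div_eq_iff hz_tr.ne_zero, mul_assoc, ← sq, eq_comm,
    ← eq_inv_mul_iff_mul_eq₀ ((map_ne_zero _).mpr (zpow_ne_zero k (pow_ne_zero 2 hδ0))),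
    ← map_inv₀, ← map_mul] at hσz
  exact hz_tr (.of_pow two_pos (hσz ▸ isAlgebraic_algebraMap _))

end MobiusAutomorphism

theorem stmt_4_general (q : ℕ) (hq : ∃ k : ℕ, 0 < k ∧ q = 2 ^ k)
    (Fq2 : Type*) [Field Fq2] [Fintype Fq2] (hcard : Fintype.card Fq2 = q ^ 2)
    (H : Type*) [Field H] [Algebra Fq2 H]
    (x y : H) (hgen : IntermediateField.adjoin Fq2 {x, y} = ⊤)
    (heq : y ^ q + y = x ^ (q + 1)) (hx : Transcendental Fq2 x)
    (ω : H ≃ₐ[Fq2] H) (hωx : ω x = x / y) (hωy : ω y = 1 / y)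
    (δ : Fq2) (hδ0 : δ ≠ 0) (n : ℕ) (hn : n = orderOf δ)
    (hord : (n = q - 1 ∧ 1 < n) ∨ n = q + 1)
    (c : Fq2) (hc : c = δ + δ⁻¹)
    (τ : H ≃ₐ[Fq2] H) (hτx : τ x = x) (hτy : τ y = y + algebraMap Fq2 H c)
    (σ : H ≃ₐ[Fq2] H) (hσ : σ = τ * ω) :
    orderOf σ = n ∧
    ω * σ = σ ^ (n - 1) * ω ∧
    Nonempty ((Subgroup.closure {τ, ω} : Subgroup (H ≃ₐ[Fq2] H)) ≃* DihedralGroup n) := by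
  obtain ⟨k, -, rfl⟩ := hq
  have : CharP Fq2 2 := charP_of_card_eq_prime_pow (hcard.trans (pow_mul 2 k 2).symm)
  have : CharP H 2 := charP_of_injective_algebraMap' Fq2 2
  have hy : Transcendental Fq2 y := transcendental_of_pow_add_self_eq_pow hx heq
  have hn1 : 1 < n := by have := Nat.one_le_two_pow (n := k); omega
  have hδ1 : δ ≠ 1 := by rintro rfl; rw [orderOf_one] at hn; omega
  have hcH : algebraMap Fq2 H c = algebraMap Fq2 H δ + (algebraMap Fq2 H δ)⁻¹ := by
    rw [hc, map_add, map_inv₀]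
  have hω2 := AlgEquiv.mul_self_eq_one_of_apply_div hgen hy.ne_zero hωx hωy
  have hτ2 := AlgEquiv.mul_self_eq_one_of_apply_add_algebraMap hgen hτx hτy
  have hτω : τ = σ * ω := by rw [hσ, mul_assoc, hω2, mul_one]
  have hσx : σ x = x / (y + (algebraMap Fq2 H δ + (algebraMap Fq2 H δ)⁻¹)) := by
    rw [hσ, AlgEquiv.mul_apply, hωx, map_div₀, hτx, hτy, hcH]
  have hσy : σ y = (y + (algebraMap Fq2 H δ + (algebraMap Fq2 H δ)⁻¹))⁻¹ := by
    rw [hσ, AlgEquiv.mul_apply, hωy, one_div, map_inv₀, hτy, hcH]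
  have hσn : orderOf σ = n := hn ▸ orderOf_eq_of_apply_eq_inv_add hgen hy hδ0 hδ1 hσx hσy
  have hωσ : ω * σ * ω⁻¹ = σ⁻¹ := by
    rw [hσ, mul_inv_rev, inv_eq_of_mul_eq_one_right hω2, inv_eq_of_mul_eq_one_right hτ2,
      mul_assoc, mul_assoc, hω2, mul_one]
  refine ⟨hσn, ?_, ?_⟩
  · rw [pow_sub σ hn1.le, ← hσn, pow_orderOf_eq_one, pow_one, one_mul, ← hωσ,
      inv_mul_cancel_right]
  · rw [hτω, Subgroup.closure_pair_mul_left, ← hσn]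
    exact DihedralGroup.nonempty_closure_mulEquiv hω2 hωσ
      (notMem_zpowers_of_apply_eq_inv hy hδ0 hδ1 (hωy.trans (one_div y)) hσy)

/-- Let `q` be a power of `2` and let `H = F_{q²}(x, y)` be the Hermitian
function field over `F_{q²}` defined by `y^q + y = x^(q+1)`, with involution automorphism
`ω(x) = x/y`, `ω(y) = 1/y`.  Let `δ ∈ F_{q²}*` be an element whose multiplicative order
`n` equals `q - 1 > 1` or `q + 1`, set `c = δ + δ⁻¹`, let `τ` be the automorphism
`τ(x) = x`, `τ(y) = y + c`, and set `σ = τ·ω` (so that `σ(x) = x/(y + c)` and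
`σ(y) = 1/(y + c)`).  Then `σ` has order `n`, the relation `ω σ = σ^(n-1) ω` holds, and
the group `D = ⟨τ, ω⟩` is isomorphic to the dihedral group of order `2n` (with
presentation `⟨ω, σ ∣ ω² = 1, σ^n = 1, ω σ = σ^(n-1) ω⟩`). -/
theorem stmt_4 (q : ℕ) (hq : ∃ k : ℕ, 0 < k ∧ q = 2 ^ k)
    (Fq2 : Type*) [Field Fq2] [Fintype Fq2] (hcard : Fintype.card Fq2 = q ^ 2)
    (H : Type*) [Field H] [Algebra Fq2 H]
    (x y : H) (hgen : IntermediateField.adjoin Fq2 {x, y} = ⊤)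
    (heq : y ^ q + y = x ^ (q + 1)) (hx : Transcendental Fq2 x)
    (hconst : ∀ z : H, IsAlgebraic Fq2 z → ∃ a : Fq2, algebraMap Fq2 H a = z)
    (ω : H ≃ₐ[Fq2] H) (hωx : ω x = x / y) (hωy : ω y = 1 / y)
    (δ : Fq2) (hδ0 : δ ≠ 0) (n : ℕ) (hn : n = orderOf δ)
    (hord : (n = q - 1 ∧ 1 < n) ∨ n = q + 1)
    (c : Fq2) (hc : c = δ + δ⁻¹)
    (τ : H ≃ₐ[Fq2] H) (hτx : τ x = x) (hτy : τ y = y + algebraMap Fq2 H c)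
    (σ : H ≃ₐ[Fq2] H) (hσ : σ = τ * ω) :
    orderOf σ = n ∧
    ω * σ = σ ^ (n - 1) * ω ∧
    Nonempty ((Subgroup.closure {τ, ω} : Subgroup (H ≃ₐ[Fq2] H)) ≃* DihedralGroup n) :=
  stmt_4_general q hq Fq2 hcard H x y hgen heq hx ω hωx hωy δ hδ0 n hn hord c hc τ hτx hτy σ hσ
end

section
/- Let q be an odd prime power, let δ ∈ F_{q²}* and set c = δ − δ^{-1}. Then c^q + c = 0 if and only if δ^{q+1} = 1 or δ^{q−1} = −1. -/
/-- Let `q` be an odd prime power, let `δ ∈ F_{q²}*` and set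
`c = δ - δ⁻¹`.  Then `c^q + c = 0` if and only if `δ^(q+1) = 1` or `δ^(q-1) = -1`. -/
theorem stmt_17 (q : ℕ) (hq : ∃ p n : ℕ, p.Prime ∧ Odd p ∧ 0 < n ∧ q = p ^ n)
    (F : Type*) [Field F] [Fintype F] (hcard : Fintype.card F = q ^ 2)
    (δ : F) (hδ : δ ≠ 0) (c : F) (hc : c = δ - δ⁻¹) :
    c ^ q + c = 0 ↔ δ ^ (q + 1) = 1 ∨ δ ^ (q - 1) = -1 := by
  obtain ⟨p, n, hp, hpodd, hn, hqpn⟩ := hq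
  -- characteristic
  have hr := CharP.char_is_prime F (ringChar F)
  have : CharP F (ringChar F) := ringChar.charP F
  obtain ⟨m, hm⟩ := FiniteField.card F (ringChar F)
  have hpr : p = ringChar F := by
    have hdvd : p ∣ ringChar F ^ (m : ℕ) := by
      rw [← hm.2, hcard, hqpn, ← pow_mul]
      exact dvd_pow_self p (by positivity)
    exact (Nat.prime_dvd_prime_iff_eq hp hr).mp (hp.dvd_of_dvd_pow hdvd)
  have hcharp : CharP F p := hpr ▸ this
  haveI : Fact (Nat.Prime p) := ⟨hp⟩
  have hfrob : c ^ q = δ ^ q - δ⁻¹ ^ q := by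
    rw [hc, hqpn, sub_pow_char_pow]
  have hq1 : 1 ≤ q := by rw [hqpn]; exact Nat.one_le_pow _ _ hp.pos
  have hδq : δ ^ q ≠ 0 := pow_ne_zero _ hδ
  have key : c ^ q + c = 0 ↔ (δ ^ q + δ) * (δ ^ q * δ - 1) = 0 := by
    rw [hfrob, hc, inv_pow]
    constructor
    · intro h
      have := mul_eq_zero_of_left h (δ ^ q * δ)
      field_simp at this ⊢
      linear_combination this
    · intro h
      field_simp
      linear_combination h
  rw [key, mul_eq_zero]
  have e1 : δ ^ (q + 1) = δ ^ q * δ := by rw [pow_succ]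
  have e2 : δ ^ (q - 1) * δ = δ ^ q := by
    rw [← pow_succ, Nat.sub_add_cancel hq1]
  constructor
  · rintro (h | h)
    · right
      have h2 : δ ^ (q - 1) * δ = -1 * δ := by rw [e2]; linear_combination h
      exact mul_right_cancel₀ hδ h2
    · left; rw [e1]; linear_combination h
  · rintro (h | h)
    · right; rw [e1] at h; linear_combination h
    · left
      have h3 : δ ^ q = -δ := by rw [← e2, h]; ring
      rw [h3]; ring
end

section
/- Let q be a power of 2, let δ ∈ F_{q²}* with δ ≠ 1 and let n be the multiplicative order of δ. Set c = δ + δ^{-1} and define the sequence (v_i) in F_{q²} by v_{−1} = 0, v_0 = 1 and v_i = c·v_{i−1} + v_{i−2} for i ≥ 1. Then for every integer i ≥ 1, v_{i−1} = 0 if and only if n divides i, and whenever n divides i one has v_i = 1. In particular, the matrix C = [[c, 1], [1, 0]] ∈ GL₂(F_{q²}) has order n. -/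
/-!
The powers of `C` are `C ^ (m + 1) = !![v (m + 1), v m; v m, v (m - 1)]`. If `δ δ' = -1` and
`c = δ + δ'`, then `δ, δ'` are the roots of `X² - cX - 1` and the Binet formula
`(δ - δ') v (m - 1) = δ ^ m - δ' ^ m` holds. In characteristic 2 one may take `δ' = δ⁻¹`, and the
formula becomes `c v (m - 1) = x + x⁻¹` with `x = δ ^ m`, where `c ≠ 0` because `δ ≠ 1`. Since
`x (x + x⁻¹) = (x + 1)²`, this vanishes exactly when `δ ^ m = 1`. It follows that `C ^ m = 1`
iff `δ ^ m = 1`, so `C` and `δ` have the same order.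
-/

section Recurrence

variable {R : Type*} [CommRing R] {c : R} {v : ℤ → R}

theorem recurrence_add_one (hrec : ∀ i : ℤ, 1 ≤ i → v i = c * v (i - 1) + v (i - 2))
    {i : ℤ} (hi : 0 ≤ i) : v (i + 1) = c * v i + v (i - 1) := by
  rw [hrec (i + 1) (by omega), add_sub_cancel_right, show i + 1 - 2 = i - 1 by ring]

variable (hvm1 : v (-1) = 0) (hv0 : v 0 = 1)
  (hrec : ∀ i : ℤ, 1 ≤ i → v i = c * v (i - 1) + v (i - 2))
include hvm1 hv0 hrec

theorem companion_pow_succ (m : ℕ) :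
    (!![c, 1; 1, 0] : Matrix (Fin 2) (Fin 2) R) ^ (m + 1) =
      !![v (m + 1), v m; v m, v (m - 1)] := by
  induction m with
  | zero =>
    have h1 := recurrence_add_one hrec (le_refl 0)
    simp only [zero_add, hv0, zero_sub, hvm1, mul_one, add_zero] at h1
    simp [h1, hv0, hvm1]
  | succ m ih =>
    push_cast
    rw [pow_succ, ih, add_sub_cancel_right, recurrence_add_one hrec (i := m + 1) (by omega),
      recurrence_add_one hrec (Int.natCast_nonneg m)]
    ext i j
    fin_cases i <;> fin_cases j <;> simp [Matrix.mul_apply, Fin.sum_univ_succ] <;> ring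

theorem sub_mul_eq_pow_sub_pow {δ δ' : R} (hδ : δ * δ' = -1) (hc : c = δ + δ') (m : ℕ) :
    (δ - δ') * v (m - 1) = δ ^ m - δ' ^ m := by
  induction m using Nat.twoStepInduction with
  | zero => simp [hvm1]
  | one => simp [hv0]
  | more m ih₀ ih₁ =>
    subst hc
    push_cast at ih₁ ⊢
    rw [add_sub_cancel_right] at ih₁
    rw [show (m : ℤ) + 2 - 1 = m + 1 by ring, recurrence_add_one hrec (Int.natCast_nonneg m)]
    linear_combination (δ + δ') * ih₁ + ih₀ + (δ ^ m - δ' ^ m) * hδ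

end Recurrence

section CharTwo

variable {F : Type*} [Field F] [CharP F 2]

theorem CharTwo.add_inv_eq_zero_iff {x : F} (hx : x ≠ 0) : x + x⁻¹ = 0 ↔ x = 1 := by
  rw [← mul_eq_zero_iff_left hx, mul_add, mul_inv_cancel₀ hx, CharTwo.add_eq_zero, ← sq,
    sq_eq_one_iff, CharTwo.neg_eq, or_self]

variable {δ c : F} {v : ℤ → F} (hδ0 : δ ≠ 0) (hδ1 : δ ≠ 1) (hc : c = δ + δ⁻¹)
  (hvm1 : v (-1) = 0) (hv0 : v 0 = 1)
  (hrec : ∀ i : ℤ, 1 ≤ i → v i = c * v (i - 1) + v (i - 2))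
include hδ0 hc hvm1 hv0 hrec

theorem CharTwo.mul_eq_pow_add_inv_pow (m : ℕ) : c * v (m - 1) = δ ^ m + δ⁻¹ ^ m := by
  have h := sub_mul_eq_pow_sub_pow hvm1 hv0 hrec
    (by rw [mul_inv_cancel₀ hδ0, CharTwo.neg_eq]) hc m
  rwa [CharTwo.sub_eq_add δ, CharTwo.sub_eq_add (δ ^ m), ← hc] at h

include hδ1

theorem CharTwo.recurrence_eq_zero_iff (m : ℕ) : v (m - 1) = 0 ↔ δ ^ m = 1 := by
  have hc0 : c ≠ 0 := hc ▸ (CharTwo.add_inv_eq_zero_iff hδ0).not.mpr hδ1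
  rw [← mul_eq_zero_iff_left hc0, CharTwo.mul_eq_pow_add_inv_pow hδ0 hc hvm1 hv0 hrec, inv_pow,
    CharTwo.add_inv_eq_zero_iff (pow_ne_zero m hδ0)]

theorem CharTwo.recurrence_eq_one_of_pow_eq_one {m : ℕ} (hm : δ ^ m = 1) : v m = 1 := by
  have hc0 : c ≠ 0 := hc ▸ (CharTwo.add_inv_eq_zero_iff hδ0).not.mpr hδ1
  have h := CharTwo.mul_eq_pow_add_inv_pow hδ0 hc hvm1 hv0 hrec (m + 1)
  rw [pow_succ, pow_succ, inv_pow, hm, inv_one, one_mul, one_mul, ← hc] at h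
  push_cast at h
  rwa [add_sub_cancel_right, mul_eq_left₀ hc0] at h

theorem CharTwo.companion_pow_eq_one_iff (m : ℕ) :
    (!![c, 1; 1, 0] : Matrix (Fin 2) (Fin 2) F) ^ m = 1 ↔ δ ^ m = 1 := by
  rcases m with _ | m
  · simp
  have hzero := CharTwo.recurrence_eq_zero_iff hδ0 hδ1 hc hvm1 hv0 hrec (m + 1)
  push_cast at hzero
  rw [add_sub_cancel_right] at hzero
  rw [companion_pow_succ hvm1 hv0 hrec, Matrix.one_fin_two, ← hzero]
  simp only [EmbeddingLike.apply_eq_iff_eq, Matrix.vecCons_inj, and_true]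
  refine ⟨fun h ↦ h.2.1, fun h0 ↦ ?_⟩
  have h1 : v (m + 1) = 1 := by
    exact_mod_cast CharTwo.recurrence_eq_one_of_pow_eq_one hδ0 hδ1 hc hvm1 hv0 hrec (hzero.mp h0)
  have hprev := recurrence_add_one hrec (Int.natCast_nonneg m)
  rw [h1, h0, mul_zero, zero_add] at hprev
  exact ⟨⟨h1, h0⟩, h0, hprev.symm⟩

end CharTwo

/-- Let `q` be a power of `2`, let `δ ∈ F_{q²}*` with `δ ≠ 1` and let
`n` be the multiplicative order of `δ`.  Set `c = δ + δ⁻¹` and define the sequence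
`(v i)` in `F_{q²}` by `v (-1) = 0`, `v 0 = 1` and `v i = c * v (i-1) + v (i-2)` for
`i ≥ 1`.  Then for every integer `i ≥ 1`, `v (i-1) = 0` if and only if `n ∣ i`, and
whenever `n ∣ i` (with `i ≥ 0`) one has `v i = 1`.  In particular, the matrix
`C = [[c, 1], [1, 0]]` has order `n`. -/
theorem stmt_19 (q : ℕ) (hq : ∃ k : ℕ, 0 < k ∧ q = 2 ^ k)
    (F : Type*) [Field F] [Fintype F] (hcard : Fintype.card F = q ^ 2)
    (δ : F) (hδ0 : δ ≠ 0) (hδ1 : δ ≠ 1) (n : ℕ) (hn : n = orderOf δ)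
    (c : F) (hc : c = δ + δ⁻¹) (v : ℤ → F)
    (hvm1 : v (-1) = 0) (hv0 : v 0 = 1)
    (hrec : ∀ i : ℤ, 1 ≤ i → v i = c * v (i - 1) + v (i - 2)) :
    (∀ i : ℤ, 1 ≤ i → (v (i - 1) = 0 ↔ (n : ℤ) ∣ i)) ∧
    (∀ i : ℤ, 0 ≤ i → (n : ℤ) ∣ i → v i = 1) ∧
    orderOf (!![c, 1; 1, 0] : Matrix (Fin 2) (Fin 2) F) = n := by
  obtain ⟨k, -, rfl⟩ := hq
  have : CharP F 2 := charP_of_card_eq_prime_pow (hcard.trans (pow_mul 2 k 2).symm)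
  subst hn
  refine ⟨fun i hi ↦ ?_, fun i hi hdvd ↦ ?_, ?_⟩
  · lift i to ℕ using by omega
    rw [Int.natCast_dvd_natCast, orderOf_dvd_iff_pow_eq_one]
    exact CharTwo.recurrence_eq_zero_iff hδ0 hδ1 hc hvm1 hv0 hrec i
  · lift i to ℕ using hi
    rw [Int.natCast_dvd_natCast, orderOf_dvd_iff_pow_eq_one] at hdvd
    exact CharTwo.recurrence_eq_one_of_pow_eq_one hδ0 hδ1 hc hvm1 hv0 hrec hdvd
  · exact orderOf_eq_orderOf_iff.mpr (CharTwo.companion_pow_eq_one_iff hδ0 hδ1 hc hvm1 hv0 hrec)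
end
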